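/- If A is a critical independent set of a graph G and X = A ∪ N(A), then α(G - X) ≤ μ(G - X), where G - X is the subgraph induced on V(G) - X. -/

import Mathlib

open SimpleGraph

variable {V : Type*}

/-- A set of vertices is independent: no two of its vertices are adjacent. -/
def IsIndep (G : SimpleGraph V) (s : Set V) : Prop :=
  s.Pairwise fun a b => ¬ G.Adj a b

/-- The independence number α(G). -/
noncomputable def alphaNum (G : SimpleGraph V) : ℕ :=
  sSup {n | ∃ s : Set V, IsIndep G s ∧ s.ncard = n}

/-- The matching number μ(G). -/
noncomputable def muNum (G : SimpleGraph V) : ℕ :=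
  sSup {n | ∃ M : SimpleGraph.Subgraph G, M.IsMatching ∧ M.edgeSet.ncard = n}

/-- The neighborhood N(A) of a set of vertices. -/
def nbhd (G : SimpleGraph V) (A : Set V) : Set V := {v | ∃ a ∈ A, G.Adj a v}

/-- The difference d(A) = |A| - |N(A)| of a set of vertices. -/
noncomputable def diffSet (G : SimpleGraph V) (A : Set V) : ℤ :=
  (A.ncard : ℤ) - (nbhd G A).ncard

/-- The critical difference d(G). -/
noncomputable def critDiff (G : SimpleGraph V) : ℤ :=
  sSup {d | ∃ I : Set V, IsIndep G I ∧ diffSet G I = d}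

/-- A critical independent set: an independent set attaining the critical difference. -/
def IsCriticalIndep (G : SimpleGraph V) (A : Set V) : Prop :=
  IsIndep G A ∧ diffSet G A = critDiff G

/-- ker(G): the intersection of all critical independent sets. -/
noncomputable def kerSet (G : SimpleGraph V) : Set V :=
  ⋂₀ {A | IsCriticalIndep G A}

/-- A maximum independent set. -/
noncomputable def IsMaxIndep (G : SimpleGraph V) (S : Set V) : Prop :=
  IsIndep G S ∧ S.ncard = alphaNum G

/-- core(G): the intersection of all maximum independent sets. -/
noncomputable def coreSet (G : SimpleGraph V) : Set V :=
  ⋂₀ {S | IsMaxIndep G S}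

/-- A König–Egerváry graph: α(G) + μ(G) = n(G). -/
def KonigEgervary (G : SimpleGraph V) : Prop :=
  alphaNum G + muNum G = Nat.card V

/-!
If `S` is independent in `G - X`, then `A ∪ S` is independent in `G` and
`N(A ∪ S) ⊆ N(A) ∪ N_{G - X}(S)`, so the maximality of `|A| - |N(A)|` forces
`|S| ≤ |N_{G - X}(S)|`. Applied to a maximum independent set `S` of `G - X`, this is Hall's
condition, so `S` has a system of distinct neighbours; they lie outside `S`, and the edges to
them form a matching of size `α(G - X)`.
-/

section

variable {G : SimpleGraph V}

theorem IsIndep.mono {s t : Set V} (hs : IsIndep G s) (hts : t ⊆ s) : IsIndep G t :=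
  Set.Pairwise.mono hts hs

theorem nbhd_union (A B : Set V) : nbhd G (A ∪ B) = nbhd G A ∪ nbhd G B := by
  ext v
  simp only [nbhd, Set.mem_union, Set.mem_ofPred_eq]
  constructor
  · rintro ⟨a, ha | ha, hav⟩
    exacts [Or.inl ⟨a, ha, hav⟩, Or.inr ⟨a, ha, hav⟩]
  · rintro (⟨a, ha, hav⟩ | ⟨a, ha, hav⟩)
    exacts [⟨a, Or.inl ha, hav⟩, ⟨a, Or.inr ha, hav⟩]

theorem IsIndep.image_val {X : Set V} {S : Set X} (hS : IsIndep (G.induce X) S) :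
    IsIndep G (Subtype.val '' S) := by
  rintro _ ⟨x, hx, rfl⟩ _ ⟨y, hy, rfl⟩ hxy
  exact hS hx hy (ne_of_apply_ne Subtype.val hxy)

theorem image_val_nbhd_induce (X : Set V) (S : Set X) :
    Subtype.val '' nbhd (G.induce X) S = nbhd G (Subtype.val '' S) ∩ X := by
  ext v
  constructor
  · rintro ⟨w, ⟨x, hx, hxw⟩, rfl⟩
    exact ⟨⟨x, ⟨x, hx, rfl⟩, hxw⟩, w.2⟩
  · rintro ⟨⟨_, ⟨x, hx, rfl⟩, hxv⟩, hv⟩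
    exact ⟨⟨v, hv⟩, ⟨x, hx, hxv⟩, rfl⟩

theorem exists_isMatching_ncard_edgeSet_eq_of_injective {S : Set V} (f : S → V)
    (hf : Function.Injective f) (hadj : ∀ x : S, G.Adj x (f x)) (hfS : ∀ x, f x ∉ S) :
    ∃ M : G.Subgraph, M.IsMatching ∧ M.edgeSet.ncard = S.ncard := by
  refine ⟨⨆ x, G.subgraphOfAdj (hadj x), ?_, ?_⟩
  · refine Subgraph.IsMatching.iSup (fun x => .subgraphOfAdj (hadj x)) fun x y hxy => ?_
    have hxy' : (x : V) ≠ y := fun h => hxy (Subtype.ext h)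
    simp only [support_subgraphOfAdj, Set.disjoint_insert_left,
      Set.disjoint_insert_right, Set.disjoint_singleton, Set.mem_insert_iff,
      Set.mem_singleton_iff, not_or]
    exact ⟨⟨hxy'.symm, fun h => hfS x (h ▸ y.2)⟩, fun h => hfS y (h ▸ x.2), hf.ne hxy⟩
  · have hinj : Function.Injective fun x : S => s(↑x, f x) := by
      intro x y hxy
      rcases Sym2.eq_iff.mp hxy with ⟨h, -⟩ | ⟨h, -⟩
      · exact Subtype.val_injective h
      · exact absurd (h ▸ x.2) (hfS y)
    simp only [Subgraph.edgeSet_iSup, edgeSet_subgraphOfAdj]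
    rw [← Set.range_eq_iUnion, Set.ncard_range_of_injective hinj, Nat.card_coe_set_eq]

variable [Finite V]

theorem exists_isIndep_ncard_eq_alphaNum (G : SimpleGraph V) :
    ∃ S : Set V, IsIndep G S ∧ S.ncard = alphaNum G := by
  refine Nat.sSup_mem (s := {n | ∃ S : Set V, IsIndep G S ∧ S.ncard = n})
    ⟨0, ∅, by simp [IsIndep], by simp⟩ ⟨Nat.card V, ?_⟩
  rintro _ ⟨S, -, rfl⟩
  exact Set.ncard_le_card S

theorem ncard_edgeSet_le_muNum {M : G.Subgraph} (hM : M.IsMatching) :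
    M.edgeSet.ncard ≤ muNum G := by
  refine le_csSup ⟨Nat.card (Sym2 V), ?_⟩ ⟨M, hM, rfl⟩
  rintro _ ⟨N, -, rfl⟩
  exact Set.ncard_le_card N.edgeSet

theorem diffSet_le_critDiff {I : Set V} (hI : IsIndep G I) : diffSet G I ≤ critDiff G := by
  refine le_csSup ⟨Nat.card V, ?_⟩ ⟨I, hI, rfl⟩
  rintro _ ⟨J, -, rfl⟩
  have := Set.ncard_le_card J
  unfold diffSet
  omega

theorem alphaNum_le_muNum_of_forall_ncard_le_ncard_nbhd
    (hHall : ∀ S : Set V, IsIndep G S → S.ncard ≤ (nbhd G S).ncard) :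
    alphaNum G ≤ muNum G := by
  classical
  have := Fintype.ofFinite V
  obtain ⟨S, hS, hSα⟩ := exists_isIndep_ncard_eq_alphaNum G
  have hHallS : ∀ T : Finset S, T.card ≤ ({v | ∃ x ∈ T, G.Adj x v} : Finset V).card := by
    intro T
    have hnbhd :
        nbhd G (Subtype.val '' (T : Set S)) = ({v | ∃ x ∈ T, G.Adj x v} : Finset V) := by
      ext v
      simp [nbhd]
    have := hHall _ (hS.mono (Subtype.coe_image_subset S T))
    rwa [hnbhd, Set.ncard_coe_finset, Set.ncard_image_of_injective _ Subtype.val_injective,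
      Set.ncard_coe_finset] at this
  obtain ⟨f, hf, hadj⟩ :=
    (Fintype.all_card_le_filter_rel_iff_exists_injective (fun (x : S) v => G.Adj x v)).mp hHallS
  obtain ⟨M, hM, hMS⟩ := exists_isMatching_ncard_edgeSet_eq_of_injective f hf hadj
    fun x hx => hS x.2 hx (G.ne_of_adj (hadj x)) (hadj x)
  rw [← hSα, ← hMS]
  exact ncard_edgeSet_le_muNum hM

theorem IsCriticalIndep.ncard_le_ncard_nbhd_inter_compl {A S : Set V}
    (hA : IsCriticalIndep G A) (hS : IsIndep G S) (hSX : S ⊆ (A ∪ nbhd G A)ᶜ) :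
    S.ncard ≤ (nbhd G S ∩ (A ∪ nbhd G A)ᶜ).ncard := by
  have hdisj : Disjoint A S := Set.disjoint_right.mpr fun _ hs ha => hSX hs (Or.inl ha)
  have hnotAdj : ∀ s ∈ S, ∀ a ∈ A, ¬ G.Adj a s :=
    fun _ hs a ha has => hSX hs (Or.inr ⟨a, ha, has⟩)
  have hAS : IsIndep G (A ∪ S) := by
    rintro u (hu | hu) v (hv | hv) huv
    · exact hA.1 hu hv huv
    · exact hnotAdj v hv u hu
    · exact fun h => hnotAdj u hu v hv h.symm
    · exact hS hu hv huv
  have hnbhd : nbhd G (A ∪ S) ⊆ nbhd G A ∪ (nbhd G S ∩ (A ∪ nbhd G A)ᶜ) := by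
    rw [nbhd_union]
    rintro v (hv | ⟨s, hs, hsv⟩)
    · exact Or.inl hv
    by_cases hvX : v ∈ A ∪ nbhd G A
    · exact Or.inl (hvX.resolve_left fun hvA => hnotAdj s hs v hvA hsv.symm)
    · exact Or.inr ⟨⟨s, hs, hsv⟩, hvX⟩
  have hcard_union : (A ∪ S).ncard = A.ncard + S.ncard := Set.ncard_union_eq hdisj
  have hcard_nbhd := (Set.ncard_le_ncard hnbhd).trans (Set.ncard_union_le _ _)
  have hcrit := diffSet_le_critDiff hAS
  rw [← hA.2] at hcrit
  unfold diffSet at hcrit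
  omega

end

theorem stmt_6 [Fintype V] (G : SimpleGraph V) (A : Set V)
    (hA : IsCriticalIndep G A) :
    alphaNum (G.induce (A ∪ nbhd G A)ᶜ) ≤ muNum (G.induce (A ∪ nbhd G A)ᶜ) := by
  refine alphaNum_le_muNum_of_forall_ncard_le_ncard_nbhd fun S hS => ?_
  calc S.ncard = (Subtype.val '' S).ncard :=
        (Set.ncard_image_of_injective _ Subtype.val_injective).symm
    _ ≤ (nbhd G (Subtype.val '' S) ∩ (A ∪ nbhd G A)ᶜ).ncard :=
      hA.ncard_le_ncard_nbhd_inter_compl hS.image_val (Subtype.coe_image_subset _ S)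
    _ = _ := by rw [← image_val_nbhd_induce, Set.ncard_image_of_injective _ Subtype.val_injective]
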